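/- arXiv:2308.12744 — 4 statements merged into one kernel-verified Lean document; each statement's English description precedes it below -/
import Mathlib

section
/- For every finite word w over {0,1} containing no kink (with |w| ≥ 3), the image of w under ECA rule 18 equals its image under ECA rule 90, i.e. f18(w) = f90(w); and for every configuration x ∈ {0,1}^ℤ containing no kinks, f18(x) = f90(x). -/
open Filter MeasureTheory

/-- The local rule of ECA 18. -/
def rule18 (a b c : Bool) : Bool := (!a && !b && c) || (a && !b && !c)

/-- The local rule of ECA 90. -/
def rule90 (a _b c : Bool) : Bool := xor a c

/-- ECA 18 acting on configurations. -/
def f18C (x : ℤ → Bool) : ℤ → Bool := fun i => rule18 (x (i - 1)) (x i) (x (i + 1))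

/-- ECA 90 acting on configurations. -/
def f90C (x : ℤ → Bool) : ℤ → Bool := fun i => rule90 (x (i - 1)) (x i) (x (i + 1))

/-- Applying a radius-1 local rule to a finite word (shortens it by 2). -/
def mapWord (R : Bool → Bool → Bool → Bool) (w : List Bool) : List Bool :=
  (List.range (w.length - 2)).map fun i =>
    R (w.getD i false) (w.getD (i + 1) false) (w.getD (i + 2) false)

/-- ECA 18 acting on finite words. -/
def f18W : List Bool → List Bool := mapWord rule18

/-- ECA 90 acting on finite words. -/
def f90W : List Bool → List Bool := mapWord rule90

/-- The kink `1 0^(2k) 1`. -/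
def kinkWord (k : ℕ) : List Bool := true :: (List.replicate (2 * k) false ++ [true])

/-- A kink occurs in the word `w` at position `i`. -/
def kinkAtW (w : List Bool) (i : ℕ) : Prop :=
  ∃ k, (w.drop i).take (2 * k + 2) = kinkWord k

/-- The number of kinks in a finite word: the number of positions where a kink occurs. -/
noncomputable def kinkCount (w : List Bool) : ℕ := {i : ℕ | kinkAtW w i}.ncard

/-- A kink occurs in the configuration `x` at position `i`. -/
def kinkAtC (x : ℤ → Bool) (i : ℤ) : Prop :=
  ∃ k, ∀ j : ℕ, j < 2 * k + 2 → x (i + j) = (kinkWord k).getD j false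

/-- The configuration `x` contains exactly `m` kinks: the set of positions where a kink
occurs is finite of cardinality `m` (equivalently, `g_x(n)` tends to `m`). -/
def configKinks (x : ℤ → Bool) (m : ℕ) : Prop :=
  {i : ℤ | kinkAtC x i}.Finite ∧ {i : ℤ | kinkAtC x i}.ncard = m

/-- Left unstable words: the regular language `(ε+0)(10)^* 11 (0+1)^*`. -/
def leftUnstable (w : List Bool) : Prop :=
  ∃ z t : List Bool, ∃ n : ℕ, (z = [] ∨ z = [false]) ∧
    w = z ++ (List.replicate n [true, false]).flatten ++ [true, true] ++ t

/-- Right unstable words: the regular language `(0+1)^* 11 (01)^* (ε+0)`. -/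
def rightUnstable (w : List Bool) : Prop :=
  ∃ z s : List Bool, ∃ n : ℕ, (z = [] ∨ z = [false]) ∧
    w = s ++ [true, true] ++ (List.replicate n [false, true]).flatten ++ z

/-- Stable words: those that are neither left nor right unstable. -/
def stable (w : List Bool) : Prop := ¬ (leftUnstable w ∨ rightUnstable w)

/-- The finite extension `Σ(w)`: words `a ++ w ++ b` with the same number of kinks as `w`. -/
def extW (w : List Bool) : Set (List Bool) :=
  {u | (∃ a b : List Bool, u = a ++ w ++ b) ∧ kinkCount u = kinkCount w}

/-- The extension `Σ̃(w, p)`: configurations containing `w` at position `p`,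
with the same number of kinks as `w`. -/
def extC (w : List Bool) (p : ℤ) : Set (ℤ → Bool) :=
  {x | (∀ j : ℕ, j < w.length → x (p + j) = w.getD j false) ∧ configKinks x (kinkCount w)}

/-- The cylinder set `[w]_i`. -/
def cyl (w : List Bool) (i : ℤ) : Set (ℤ → Bool) :=
  {x | ∀ j : ℕ, j < w.length → x (i + j) = w.getD j false}

/-! The kink `1 0^0 1 = 11` already forbids two adjacent `1`s, and rules 18 and 90 differ only
on neighbourhoods `a 1 c` with `a = 1` or `c = 1`. -/

theorem rule18_eq_rule90_of_and_eq_false {a b c : Bool} (hab : (a && b) = false)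
    (hbc : (b && c) = false) : rule18 a b c = rule90 a b c := by
  revert hab hbc; cases a <;> cases b <;> cases c <;> decide

theorem kinkAtW_of_getD_eq_true {w : List Bool} {j : ℕ} (hj : j + 1 < w.length)
    (h₀ : w.getD j false = true) (h₁ : w.getD (j + 1) false = true) : kinkAtW w j := by
  refine ⟨0, ?_⟩
  rw [List.getD_eq_getElem _ _ (by omega)] at h₀
  rw [List.getD_eq_getElem _ _ hj] at h₁
  rw [List.drop_eq_getElem_cons (by omega), List.drop_eq_getElem_cons hj, h₀, h₁]
  rfl

theorem kinkAtC_of_eq_true {x : ℤ → Bool} {i : ℤ} (h₀ : x i = true)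
    (h₁ : x (i + 1) = true) : kinkAtC x i :=
  ⟨0, fun j hj => by interval_cases j <;> simpa [kinkWord]⟩

theorem getD_and_getD_succ_eq_false_of_kinkless {w : List Bool} (hw : ∀ i, ¬ kinkAtW w i)
    {j : ℕ} (hj : j + 1 < w.length) : (w.getD j false && w.getD (j + 1) false) = false :=
  Bool.eq_false_iff.2 fun h => by
    rw [Bool.and_eq_true] at h
    exact hw j (kinkAtW_of_getD_eq_true hj h.1 h.2)

theorem apply_and_apply_add_one_eq_false_of_kinkless {x : ℤ → Bool} (hx : ∀ i, ¬ kinkAtC x i)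
    (i : ℤ) : (x i && x (i + 1)) = false :=
  Bool.eq_false_iff.2 fun h => by
    rw [Bool.and_eq_true] at h
    exact hx i (kinkAtC_of_eq_true h.1 h.2)

/-- On kinkless words (of length at least 3) and kinkless configurations,
ECA 18 agrees with ECA 90. -/
theorem rule18_eq_rule90_on_kinkless :
    (∀ w : List Bool, 3 ≤ w.length → (∀ i, ¬ kinkAtW w i) → f18W w = f90W w) ∧
    (∀ x : ℤ → Bool, (∀ i, ¬ kinkAtC x i) → f18C x = f90C x) := by
  refine ⟨fun w _ hw => List.map_congr_left fun i hi => ?_, fun x hx => funext fun i => ?_⟩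
  · rw [List.mem_range] at hi
    exact rule18_eq_rule90_of_and_eq_false
      (getD_and_getD_succ_eq_false_of_kinkless hw (by omega))
      (getD_and_getD_succ_eq_false_of_kinkless hw (by omega))
  · have hprev := apply_and_apply_add_one_eq_false_of_kinkless hx (i - 1)
    rw [sub_add_cancel] at hprev
    exact rule18_eq_rule90_of_and_eq_false hprev
      (apply_and_apply_add_one_eq_false_of_kinkless hx i)
end

section
/- If w is a stable word, then every word in the finite extension Σ(w) is stable. -/
open Filter MeasureTheory

/-!
Every occurrence of `11` in a word is a kink (`1 0^0 1`). If `a ++ w ++ b` has no more kinks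
than `w`, every kink of it is one of the kinks of `w`, shifted by `|a|`; in particular an
occurrence of `11` witnessing that `a ++ w ++ b` is left (right) unstable lies inside `w`. The
part of `w` before (after) it is a suffix of `(ε+0)(10)^*` (a prefix of `(01)^*(ε+0)`), and these
languages are closed under taking suffixes (prefixes), so `w` is left (right) unstable as well.
-/

lemma kinkWord_length (k : ℕ) : (kinkWord k).length = 2 * k + 2 := by
  simp [kinkWord]

lemma kinkAtW_iff_prefix {w : List Bool} {i : ℕ} :
    kinkAtW w i ↔ ∃ k, kinkWord k <+: w.drop i := by
  simp only [kinkAtW, List.prefix_iff_eq_take, kinkWord_length, eq_comm]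

lemma kinkAtW.add_two_le_length {w : List Bool} {i : ℕ} (h : kinkAtW w i) :
    i + 2 ≤ w.length := by
  obtain ⟨k, hk⟩ := kinkAtW_iff_prefix.1 h
  have := hk.length_le
  rw [kinkWord_length, List.length_drop] at this
  omega

lemma kinkAtW.append {w : List Bool} {i : ℕ} (h : kinkAtW w i) (a b : List Bool) :
    kinkAtW (a ++ w ++ b) (a.length + i) := by
  obtain ⟨k, hk⟩ := kinkAtW_iff_prefix.1 h
  have hdrop : (a ++ w ++ b).drop (a.length + i) = w.drop i ++ b := by
    rw [List.append_assoc, ← List.drop_drop, List.drop_left,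
      List.drop_append_of_le_length (by have := h.add_two_le_length; omega)]
  exact kinkAtW_iff_prefix.2 ⟨k, hdrop ▸ hk.trans (List.prefix_append _ _)⟩

lemma finite_setOf_kinkAtW (w : List Bool) : {i : ℕ | kinkAtW w i}.Finite :=
  (Set.finite_Iio w.length).subset fun _ hi => by
    have := kinkAtW.add_two_le_length hi
    exact Set.mem_Iio.2 (by omega)

lemma setOf_kinkAtW_append_eq_image {a w b : List Bool}
    (hc : kinkCount (a ++ w ++ b) = kinkCount w) :
    {i : ℕ | kinkAtW (a ++ w ++ b) i} = (a.length + ·) '' {i | kinkAtW w i} := by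
  have hsub : (a.length + ·) '' {i | kinkAtW w i} ⊆ {i : ℕ | kinkAtW (a ++ w ++ b) i} := by
    rintro _ ⟨i, hi, rfl⟩
    exact hi.append a b
  refine (Set.eq_of_subset_of_ncard_le hsub ?_ (finite_setOf_kinkAtW _)).symm
  rw [Set.ncard_image_of_injective _ (add_right_injective a.length)]
  exact hc.le

lemma kinkAtW_append_true_true (p q : List Bool) :
    kinkAtW (p ++ [true, true] ++ q) p.length :=
  ⟨0, by simp [kinkWord]⟩

theorem exists_suffix_prefix_of_kinkCount_eq {a w b p q : List Bool}
    (hc : kinkCount (a ++ w ++ b) = kinkCount w) (h : a ++ w ++ b = p ++ [true, true] ++ q) :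
    ∃ p' q', p' <:+ p ∧ q' <+: q ∧ w = p' ++ [true, true] ++ q' := by
  have hkink : p.length ∈ (a.length + ·) '' {i | kinkAtW w i} := by
    rw [← setOf_kinkAtW_append_eq_image hc, Set.mem_ofPred_eq, h]
    exact kinkAtW_append_true_true p q
  obtain ⟨i, hi, hip : a.length + i = p.length⟩ := hkink
  have hiw := hi.add_two_le_length
  obtain ⟨p', rfl⟩ : a <+: p :=
    List.prefix_of_prefix_length_le (List.prefix_append_of_prefix (List.prefix_append a w))
      (h ▸ List.prefix_append_of_prefix (List.prefix_append p _)) (by omega)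
  simp only [List.append_assoc, List.append_cancel_left_eq] at h
  obtain ⟨q', rfl⟩ : p' ++ [true, true] <+: w := by
    refine List.prefix_of_prefix_length_le (List.prefix_append _ q) ?_ ?_
    · rw [List.append_assoc, ← h]
      exact List.prefix_append w b
    · simp only [List.length_append, List.length_cons, List.length_nil] at hip ⊢
      omega
  simp only [List.append_assoc, List.append_cancel_left_eq] at h
  exact ⟨p', q', List.suffix_append a p', ⟨b, h⟩, rfl⟩

lemma List.IsSuffix.exists_eq_of_false_cons_flatten_replicate {s : List Bool} {n : ℕ}
    (hs : s <:+ false :: (List.replicate n [true, false]).flatten) :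
    ∃ z m, (z = [] ∨ z = [false]) ∧ s = z ++ (List.replicate m [true, false]).flatten := by
  induction n generalizing s with
  | zero =>
    rcases List.suffix_cons_iff.1 hs with rfl | hs
    · exact ⟨[false], 0, Or.inr rfl, by simp⟩
    · exact ⟨[], 0, Or.inl rfl, by simpa using hs⟩
  | succ n ih =>
    simp only [List.replicate_succ, List.flatten_cons, List.cons_append, List.nil_append] at hs
    rw [List.suffix_cons_iff, List.suffix_cons_iff] at hs
    rcases hs with rfl | rfl | hs
    · exact ⟨[false], n + 1, Or.inr rfl, by simp [List.replicate_succ]⟩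
    · exact ⟨[], n + 1, Or.inl rfl, by simp [List.replicate_succ]⟩
    · exact ih hs

lemma List.IsSuffix.exists_eq_of_flatten_replicate {s z : List Bool} {n : ℕ}
    (hz : z = [] ∨ z = [false]) (hs : s <:+ z ++ (List.replicate n [true, false]).flatten) :
    ∃ z' m, (z' = [] ∨ z' = [false]) ∧ s = z' ++ (List.replicate m [true, false]).flatten := by
  refine (hs.trans (?_ : _ <:+ false :: (List.replicate n [true, false]).flatten))
    |>.exists_eq_of_false_cons_flatten_replicate
  rcases hz with rfl | rfl
  · exact List.suffix_cons _ _
  · exact List.suffix_refl _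

lemma List.IsPrefix.exists_eq_of_flatten_replicate {s z : List Bool} {n : ℕ}
    (hz : z = [] ∨ z = [false]) (hs : s <+: (List.replicate n [false, true]).flatten ++ z) :
    ∃ m z', (z' = [] ∨ z' = [false]) ∧ s = (List.replicate m [false, true]).flatten ++ z' := by
  have hrev : s.reverse <:+ z ++ (List.replicate n [true, false]).flatten := by
    have hz' : z.reverse = z := by rcases hz with rfl | rfl <;> rfl
    simpa [List.reverse_flatten, List.map_replicate, hz'] using List.reverse_suffix.2 hs
  obtain ⟨z', m, hz', hs'⟩ := hrev.exists_eq_of_flatten_replicate hz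
  have hz'' : z'.reverse = z' := by rcases hz' with rfl | rfl <;> rfl
  refine ⟨m, z', hz', ?_⟩
  simpa [List.reverse_flatten, List.map_replicate, hz''] using congrArg List.reverse hs'

/-- Extensions of stable words are stable. -/
theorem stable_extW (w : List Bool) (hw : stable w) :
    ∀ u ∈ extW w, stable u := by
  rintro u ⟨⟨a, b, rfl⟩, hc⟩ (⟨z, t, n, hz, hu⟩ | ⟨z, s, n, hz, hu⟩)
  · obtain ⟨p', q', hp', -, rfl⟩ := exists_suffix_prefix_of_kinkCount_eq hc hu
    obtain ⟨z', m, hz', rfl⟩ := hp'.exists_eq_of_flatten_replicate hz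
    exact hw (Or.inl ⟨z', q', m, hz', by simp⟩)
  · obtain ⟨p', q', -, hq', rfl⟩ :=
      exists_suffix_prefix_of_kinkCount_eq hc (by rw [hu, List.append_assoc _ _ z])
    obtain ⟨m, z', hz', rfl⟩ := hq'.exists_eq_of_flatten_replicate hz
    exact hw (Or.inr ⟨z', p', m, hz', by simp⟩)
end

section
/- Let w ∈ {0,1}^* be a word of length at least 3 that contains exactly n kinks. Then f18(w) contains m kinks with m ≤ n; moreover, if w is stable, then m ≡ n (mod 2). -/
open Filter MeasureTheory

/-!
A kink is a `1` whose next `1` lies at odd distance, so prepending `a` to `u` adds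
`a && firstTrueEven u` kinks. Under rule 18 the gap `1 0^g 1` becomes `1 0^(g-2) 1` if `g ≥ 2`
(a kink exactly when it was one) and all zeros if `g ≤ 1`. A maximal run of `1`s separated by
gaps `g ≤ 1` (a cluster) containing `c` factors `11` therefore carries `c` kinks, while in the
image only the gap between the `1`s created on both sides of it remains, of the parity of `c`:
the cluster loses `c` or `c - 1` kinks, an even number. A cluster separated from an end of the
word by at most one `0` gets no created `1` on that side and loses all its `c` kinks; stability
says exactly that `c = 0` for such clusters.

The induction adds one `1` and one gap at a time in front of a word `true :: v` and follows
`f18W (false :: true :: v)` rather than `f18W (true :: v)`: with the extra `0` in front, the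
image obeys exact equations, unaffected by the shortening of `f18W` on short words.
-/

open List

def firstTrueEven : List Bool → Bool
  | true :: _ => true
  | false :: false :: x => firstTrueEven x
  | _ => false

theorem mem_of_firstTrueEven : ∀ {x : List Bool}, firstTrueEven x = true → true ∈ x
  | true :: _, _ => mem_cons_self
  | false :: false :: _, h => mem_cons_of_mem _ (mem_cons_of_mem _ (mem_of_firstTrueEven h))

theorem firstTrueEven_false_cons : ∀ x : List Bool,
    firstTrueEven (false :: x) = (decide (true ∈ x) && !firstTrueEven x)
  | [] => rfl
  | true :: _ => by simp [firstTrueEven]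
  | false :: x => by
    rw [firstTrueEven, firstTrueEven_false_cons x]
    cases h : firstTrueEven x
    · simp
    · simp [mem_of_firstTrueEven h]

theorem firstTrueEven_replicate_false_append_true (g : ℕ) (x : List Bool) :
    firstTrueEven (replicate g false ++ true :: x) = decide (Even g) := by
  induction g with
  | zero => rfl
  | succ g ih =>
    simp [replicate_succ, firstTrueEven_false_cons, ih, Nat.even_add_one, -Nat.not_even_iff_odd]

theorem firstTrueEven_replicate_false (n : ℕ) : firstTrueEven (replicate n false) = false := by
  cases h : firstTrueEven (replicate n false)
  · rfl
  · simpa using mem_of_firstTrueEven h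

theorem exists_take_eq_iff_firstTrueEven : ∀ x : List Bool,
    (∃ k, x.take (2 * k + 1) = replicate (2 * k) false ++ [true]) ↔ firstTrueEven x = true
  | [] => by simp [firstTrueEven]
  | true :: x => by
    simp only [firstTrueEven, iff_true]
    exact ⟨0, rfl⟩
  | [false] => by
    simp only [firstTrueEven, Bool.false_eq_true, iff_false, not_exists]
    intro k hk
    simpa using congrArg getLast? hk
  | false :: true :: x => by
    simp only [firstTrueEven, Bool.false_eq_true, iff_false, not_exists]
    rintro (_ | k) <;> simp [Nat.mul_succ, replicate_succ]
  | false :: false :: x => by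
    rw [firstTrueEven, ← exists_take_eq_iff_firstTrueEven x]
    constructor
    · rintro ⟨_ | k, hk⟩
      · simp at hk
      · exact ⟨k, by simpa [Nat.mul_succ, replicate_succ] using hk⟩
    · rintro ⟨k, hk⟩
      exact ⟨k + 1, by simpa [Nat.mul_succ, replicate_succ] using hk⟩

theorem kinkAtW_cons_zero (a : Bool) (u : List Bool) :
    kinkAtW (a :: u) 0 ↔ (a && firstTrueEven u) = true := by
  simp only [kinkAtW, kinkWord, drop_zero, Nat.add_succ, take_succ_cons, cons.injEq,
    Bool.and_eq_true, ← exists_take_eq_iff_firstTrueEven, exists_and_left]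

theorem kinkAtW_cons_succ (a : Bool) (u : List Bool) (i : ℕ) :
    kinkAtW (a :: u) (i + 1) ↔ kinkAtW u i := Iff.rfl

theorem lt_length_of_kinkAtW {w : List Bool} {i : ℕ} (h : kinkAtW w i) : i < w.length := by
  obtain ⟨k, hk⟩ := h
  have := congrArg length hk
  simp [kinkWord] at this
  omega

open Classical in
theorem kinkCount_eq_sum (w : List Bool) :
    kinkCount w = ∑ i ∈ Finset.range w.length, if kinkAtW w i then 1 else 0 := by
  rw [← Finset.card_filter, kinkCount, ← Set.ncard_coe_finset]
  congr 1
  ext i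
  simpa using lt_length_of_kinkAtW

theorem kinkCount_cons (a : Bool) (u : List Bool) :
    kinkCount (a :: u) = kinkCount u + (a && firstTrueEven u).toNat := by
  classical
  simp only [kinkCount_eq_sum, length_cons, Finset.sum_range_succ', kinkAtW_cons_succ,
    kinkAtW_cons_zero]
  cases a && firstTrueEven u <;> rfl

theorem kinkCount_nil : kinkCount [] = 0 := by
  simp [kinkCount_eq_sum]

theorem kinkCount_replicate_false_append (n : ℕ) (x : List Bool) :
    kinkCount (replicate n false ++ x) = kinkCount x := by
  induction n with
  | zero => rfl
  | succ n ih => simp [replicate_succ, kinkCount_cons, ih]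

theorem kinkCount_replicate_false (n : ℕ) : kinkCount (replicate n false) = 0 := by
  simpa [kinkCount_nil] using kinkCount_replicate_false_append n []

theorem kinkCount_true_cons_replicate_false (n : ℕ) :
    kinkCount (true :: replicate n false) = 0 := by
  simp [kinkCount_cons, kinkCount_replicate_false, firstTrueEven_replicate_false]

theorem kinkCount_true_false_cons (y : List Bool) :
    kinkCount (true :: false :: y) =
      kinkCount y + (decide (true ∈ y) && !firstTrueEven y).toNat := by
  rw [kinkCount_cons, kinkCount_cons, firstTrueEven_false_cons]
  rfl

theorem kinkCount_true_false_true_cons (x : List Bool) :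
    kinkCount (true :: false :: true :: x) = kinkCount (true :: x) := by
  rw [kinkCount_cons, kinkCount_cons]
  rfl

theorem kinkCount_true_false_false_cons (x : List Bool) :
    kinkCount (true :: false :: false :: x) = kinkCount (true :: x) := by
  rw [kinkCount_cons, kinkCount_cons, kinkCount_cons, kinkCount_cons]
  rfl

theorem kinkCount_true_cons_replicate_false_append_true (g : ℕ) (x : List Bool) :
    kinkCount (true :: (replicate g false ++ true :: x)) =
      kinkCount (true :: x) + (decide (Even g)).toNat := by
  rw [kinkCount_cons, kinkCount_replicate_false_append, firstTrueEven_replicate_false_append_true,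
    Bool.true_and]

theorem f18W_cons_cons_cons (a b c : Bool) (l : List Bool) :
    f18W (a :: b :: c :: l) = rule18 a b c :: f18W (b :: c :: l) := by
  simp [f18W, mapWord, range_succ_eq_map]

theorem f18W_cons_true_cons (a c : Bool) (l : List Bool) :
    f18W (a :: true :: c :: l) = false :: f18W (true :: c :: l) := by
  rw [f18W_cons_cons_cons]
  cases a <;> cases c <;> rfl

theorem f18W_cons_true (a b : Bool) (v : List Bool) :
    f18W (a :: true :: v) = f18W (b :: true :: v) := by
  cases v with
  | nil => rfl
  | cons c l => rw [f18W_cons_true_cons, f18W_cons_true_cons]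

theorem f18W_replicate_false (n : ℕ) : f18W (replicate n false) = replicate (n - 2) false := by
  simp [f18W, mapWord, rule18]

theorem f18W_false_false_replicate_false_append_true (g : ℕ) (v : List Bool) :
    f18W (false :: false :: (replicate g false ++ true :: v)) =
      replicate g false ++ true :: f18W (false :: true :: v) := by
  induction g with
  | zero => exact f18W_cons_cons_cons false false true v
  | succ g ih =>
    rw [replicate_succ, cons_append, f18W_cons_cons_cons, ih]
    rfl

theorem f18W_false_true_true (v : List Bool) :
    f18W (false :: true :: true :: v) = false :: f18W (false :: true :: v) := by
  rw [f18W_cons_true_cons, f18W_cons_true true false]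

theorem f18W_false_true_false_true (v : List Bool) :
    f18W (false :: true :: false :: true :: v) = false :: false :: f18W (false :: true :: v) := by
  rw [f18W_cons_true_cons, f18W_cons_cons_cons]
  rfl

theorem f18W_false_true_false_false_replicate_false_append_true (g : ℕ) (v : List Bool) :
    f18W (false :: true :: false :: false :: (replicate g false ++ true :: v)) =
      false :: true :: (replicate g false ++ true :: f18W (false :: true :: v)) := by
  rw [f18W_cons_true_cons, f18W_cons_cons_cons, f18W_false_false_replicate_false_append_true]
  rfl

theorem f18W_false_true_replicate_false (b : ℕ) :
    f18W (false :: true :: replicate (b + 2) false) = false :: true :: replicate b false := by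
  rw [replicate_succ, f18W_cons_true_cons, replicate_succ, f18W_cons_cons_cons,
    ← replicate_succ, ← replicate_succ, f18W_replicate_false]
  rfl

theorem rightUnstable_append_left (p : List Bool) {u : List Bool} (h : rightUnstable u) :
    rightUnstable (p ++ u) := by
  obtain ⟨z, s, n, hz, rfl⟩ := h
  exact ⟨z, p ++ s, n, hz, by simp⟩

theorem rightUnstable_true_true_replicate_false {b : ℕ} (hb : b ≤ 1) :
    rightUnstable (true :: true :: replicate b false) :=
  ⟨replicate b false, [], 0, by interval_cases b <;> simp, by simp⟩

theorem rightUnstable_true_true_false_true {v : List Bool}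
    (h : rightUnstable (true :: true :: v)) :
    rightUnstable (true :: true :: false :: true :: v) := by
  obtain ⟨z, s, n, hz, hv⟩ := h
  cases s with
  | nil =>
    simp only [nil_append, cons_append, cons.injEq, true_and] at hv
    exact ⟨z, [], n + 1, hz, by simp [hv, replicate_succ]⟩
  | cons a s =>
    simp only [cons_append, cons.injEq] at hv
    exact ⟨z, [true, true, false] ++ s, n, hz, by simp [hv.2]⟩

theorem leftUnstable_true_true (v : List Bool) : leftUnstable (true :: true :: v) :=
  ⟨[], v, 0, Or.inl rfl, rfl⟩

theorem exists_eq_of_leftUnstable_true_cons {v : List Bool} (h : leftUnstable (true :: v)) :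
    ∃ n t, true :: v = (replicate n [true, false]).flatten ++ [true, true] ++ t := by
  obtain ⟨z, t, n, rfl | rfl, hv⟩ := h
  · exact ⟨n, t, hv⟩
  · simp at hv

theorem leftUnstable_false_true {v : List Bool} (h : leftUnstable (true :: v)) :
    leftUnstable (false :: true :: v) := by
  obtain ⟨n, t, hv⟩ := exists_eq_of_leftUnstable_true_cons h
  exact ⟨[false], t, n, Or.inr rfl, by rw [hv]; rfl⟩

theorem leftUnstable_true_false_true {v : List Bool} (h : leftUnstable (true :: v)) :
    leftUnstable (true :: false :: true :: v) := by
  obtain ⟨n, t, hv⟩ := exists_eq_of_leftUnstable_true_cons h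
  exact ⟨[], t, n + 1, Or.inl rfl, by simp [replicate_succ, hv]⟩

theorem true_cons_gap_induction {P : List Bool → Prop}
    (single : ∀ b, P (true :: replicate b false))
    (adjacent : ∀ v, P (true :: v) → P (true :: true :: v))
    (gapOne : ∀ v, P (true :: v) → P (true :: false :: true :: v))
    (gapBig : ∀ g v, P (true :: v) →
      P (true :: false :: false :: (replicate g false ++ true :: v)))
    (v : List Bool) : P (true :: v) := by
  suffices h : ∀ g, P (true :: (replicate g false ++ v)) from h 0
  induction v with
  | nil => simpa using single
  | cons a v ih =>
    intro g
    cases a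
    · simpa [replicate_succ'] using ih (g + 1)
    · match g with
      | 0 => exact adjacent v (ih 0)
      | 1 => exact gapOne v (ih 0)
      | g + 2 => simpa [replicate_succ] using gapBig g v (ih 0)

theorem true_mem_f18W_false_true (v : List Bool) (h : ¬ rightUnstable (true :: true :: v)) :
    true ∈ f18W (false :: true :: v) := by
  revert h
  refine true_cons_gap_induction (P := fun u =>
    ¬ rightUnstable (true :: u) → true ∈ f18W (false :: u)) ?_ ?_ ?_ ?_ v
  · rintro (_ | _ | b) h
    · exact absurd (rightUnstable_true_true_replicate_false (Nat.zero_le 1)) h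
    · exact absurd (rightUnstable_true_true_replicate_false le_rfl) h
    · simp [f18W_false_true_replicate_false]
  · intro v ih h
    rw [f18W_false_true_true]
    exact mem_cons_of_mem _ (ih fun h' => h (rightUnstable_append_left [true] h'))
  · intro v ih h
    rw [f18W_false_true_false_true]
    exact mem_cons_of_mem _ (mem_cons_of_mem _
      (ih fun h' => h (rightUnstable_true_true_false_true h')))
  · intro g v _ _
    simp [f18W_false_true_false_false_replicate_false_append_true]

theorem leftUnstable_of_firstTrueEven_f18W (v : List Bool)
    (h : firstTrueEven (f18W (false :: true :: v)) = true) : leftUnstable (true :: v) := by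
  revert h
  refine true_cons_gap_induction (P := fun u =>
    firstTrueEven (f18W (false :: u)) = true → leftUnstable u) ?_ ?_ ?_ ?_ v
  · rintro (_ | _ | b) h
    · exact absurd h (by decide)
    · exact absurd h (by decide)
    · simp [f18W_false_true_replicate_false, firstTrueEven] at h
  · exact fun v _ _ => leftUnstable_true_true v
  · intro v ih h
    rw [f18W_false_true_false_true, firstTrueEven] at h
    exact leftUnstable_true_false_true (ih h)
  · intro g v _ h
    simp [f18W_false_true_false_false_replicate_false_append_true, firstTrueEven] at h

theorem kinkCount_true_cons_f18W_false_true_replicate_false (b : ℕ) :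
    kinkCount (true :: f18W (false :: true :: replicate b false)) = 0 := by
  rcases b with _ | _ | b
  · simp [f18W, mapWord, kinkCount_cons, kinkCount_nil, firstTrueEven]
  · simp [f18W, mapWord, rule18, kinkCount_cons, kinkCount_nil, firstTrueEven]
  · simp [f18W_false_true_replicate_false, kinkCount_cons, kinkCount_replicate_false,
      firstTrueEven, firstTrueEven_replicate_false]

/-- `true :: f18W (false :: u)` is `f18W (false :: false :: u)`: with two zeros in front, the
cluster at the left end gets a created `1` on its left, so only the right end needs stability. -/
theorem kinkCount_true_cons_f18W_false_true (v : List Bool) :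
    kinkCount (true :: f18W (false :: true :: v)) ≤ kinkCount (true :: v) ∧
      (¬ rightUnstable (true :: v) →
        kinkCount (true :: f18W (false :: true :: v)) % 2 = kinkCount (true :: v) % 2) := by
  refine true_cons_gap_induction (P := fun u =>
    kinkCount (true :: f18W (false :: u)) ≤ kinkCount u ∧ (¬ rightUnstable u →
      kinkCount (true :: f18W (false :: u)) % 2 = kinkCount u % 2)) ?_ ?_ ?_ ?_ v
  · intro b
    simp [kinkCount_true_cons_replicate_false, kinkCount_true_cons_f18W_false_true_replicate_false]
  · intro v ih
    have hmem : ¬ rightUnstable (true :: true :: v) → true ∈ f18W (false :: true :: v) :=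
      true_mem_f18W_false_true v
    rw [f18W_false_true_true]
    generalize f18W (false :: true :: v) = y at ih hmem ⊢
    have hy : kinkCount (true :: y) = kinkCount y + (firstTrueEven y).toNat := by
      rw [kinkCount_cons, Bool.true_and]
    have hR : kinkCount (true :: true :: v) = kinkCount (true :: v) + 1 := by
      rw [kinkCount_cons]
      rfl
    rw [kinkCount_true_false_cons, hR]
    refine ⟨?_, fun hst => ?_⟩
    · have := Bool.toNat_le (decide (true ∈ y) && !firstTrueEven y)
      omega
    · -- The new `11` is a kink; on the image side the extra `0` flips the parity of the first
      -- `1` of `y`, which right stability guarantees to exist.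
      have := ih.2 fun h => hst (rightUnstable_append_left [true] h)
      rw [hy] at this
      revert this
      cases firstTrueEven y <;> simp [hmem hst] <;> omega
  · intro v ih
    rw [f18W_false_true_false_true, kinkCount_true_false_false_cons,
      kinkCount_true_false_true_cons]
    exact ⟨ih.1, fun hst => ih.2 fun h => hst (rightUnstable_append_left [true, false] h)⟩
  · intro g v ih
    rw [f18W_false_true_false_false_replicate_false_append_true, kinkCount_true_false_true_cons,
      kinkCount_true_false_false_cons, kinkCount_true_cons_replicate_false_append_true,
      kinkCount_true_cons_replicate_false_append_true]
    refine ⟨by omega, fun hst => ?_⟩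
    have := ih.2 fun h => hst (by
      simpa using rightUnstable_append_left (true :: false :: false :: replicate g false) h)
    omega

theorem kinkCount_f18W_false_true (v : List Bool) :
    kinkCount (f18W (false :: true :: v)) ≤ kinkCount (true :: v) ∧
      (¬ leftUnstable (true :: v) → ¬ rightUnstable (true :: v) →
        kinkCount (f18W (false :: true :: v)) % 2 = kinkCount (true :: v) % 2) := by
  obtain ⟨hle, hmod⟩ := kinkCount_true_cons_f18W_false_true v
  rw [kinkCount_cons, Bool.true_and] at hle hmod
  refine ⟨by omega, fun hl hr => ?_⟩
  have hfte : firstTrueEven (f18W (false :: true :: v)) = false := by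
    cases h : firstTrueEven (f18W (false :: true :: v))
    · rfl
    · exact absurd (leftUnstable_of_firstTrueEven_f18W v h) hl
  simpa [hfte] using hmod hr

theorem kinkCount_f18W_false_false (u : List Bool) :
    kinkCount (f18W (false :: false :: u)) ≤ kinkCount u ∧
      (¬ rightUnstable u → kinkCount (f18W (false :: false :: u)) % 2 = kinkCount u % 2) := by
  induction u with
  | nil => simp [f18W, mapWord, kinkCount_nil]
  | cons a u ih =>
    cases a with
    | false =>
      rw [f18W_cons_cons_cons, kinkCount_cons, kinkCount_cons]
      simpa [rule18] using
        ⟨ih.1, fun h => ih.2 fun h' => h (rightUnstable_append_left [false] h')⟩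
    | true =>
      rw [f18W_cons_cons_cons]
      exact kinkCount_true_cons_f18W_false_true u

theorem kinkCount_f18W_true_cons (v : List Bool) :
    kinkCount (f18W (true :: v)) = kinkCount (f18W (false :: true :: v)) := by
  cases v with
  | nil => rfl
  | cons c l => rw [f18W_cons_true_cons, kinkCount_cons, Bool.false_and, Bool.toNat_false,
      add_zero]

theorem kinkCount_f18W_le_and_mod_two (w : List Bool) :
    kinkCount (f18W w) ≤ kinkCount w ∧
      (stable w → kinkCount (f18W w) % 2 = kinkCount w % 2) := by
  simp only [stable, not_or, and_imp]
  match w with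
  | [] | [false] => simp [f18W, mapWord, kinkCount_cons, kinkCount_nil]
  | false :: false :: u =>
    rw [kinkCount_cons, kinkCount_cons]
    simpa using ⟨(kinkCount_f18W_false_false u).1, fun _ hr =>
      (kinkCount_f18W_false_false u).2 fun h => hr (rightUnstable_append_left [false, false] h)⟩
  | false :: true :: v =>
    rw [kinkCount_cons]
    simpa using ⟨(kinkCount_f18W_false_true v).1, fun hl hr => (kinkCount_f18W_false_true v).2
      (fun h => hl (leftUnstable_false_true h)) fun h => hr (rightUnstable_append_left [false] h)⟩
  | true :: v =>
    rw [kinkCount_f18W_true_cons]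
    exact kinkCount_f18W_false_true v

theorem kinkCount_f18W_general (w : List Bool) (n : ℕ)
    (hn : kinkCount w = n) :
    kinkCount (f18W w) ≤ n ∧ (stable w → kinkCount (f18W w) % 2 = n % 2) :=
  hn ▸ kinkCount_f18W_le_and_mod_two w

/-- ECA 18 cannot increase the number of kinks of a word, and preserves its
parity on stable words. -/
theorem kinkCount_f18W (w : List Bool) (hlen : 3 ≤ w.length) (n : ℕ)
    (hn : kinkCount w = n) :
    kinkCount (f18W w) ≤ n ∧ (stable w → kinkCount (f18W w) % 2 = n % 2) :=
  kinkCount_f18W_general w n hn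
end

section
/- For all positions i, j ∈ ℤ there exists n ∈ ℕ such that Σ̃(1101001, i) ⊆ f18^n(Σ̃(1101001, j)). -/
/-!
For a word beginning and ending with `1`, a configuration containing it at `a` and no kinks other
than the word's own is the same as one carrying the word at `a` and vanishing at odd distance from
it on both sides (`OddPadded`): a `1` at odd distance from an end of the word would enclose a
further kink. A padded configuration has a padded `f18` preimage whose window is any preimage word
of its own window that also sends the two border cells to `0`. The chains of such preimage words
  `1101001 ← 100100001 ← 10000110100 ← 0011010010000` and
  `1101001 ← 100100001 ← 10000101100 ← 1000000100101 ← 100000000110001 ← 00101011010010100`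
end in words containing `1101001` one cell further left, resp. right, with zeros at odd distance,
so the word moves left in three steps and right in five.
-/

open Filter MeasureTheory

lemma kinkWord_getD (k j : ℕ) : (kinkWord k).getD j false = (j == 0 || j == 2 * k + 1) := by
  rcases j with _ | j
  · rfl
  · rw [kinkWord, List.getD_cons_succ]
    simp only [List.getD_eq_getElem?_getD, List.getElem?_append, List.length_replicate,
      List.getElem?_replicate, List.getElem?_singleton]
    split_ifs <;> simp <;> omega

lemma kinkWord_pattern_iff {x : ℤ → Bool} {i : ℤ} {k : ℕ} :
    (∀ j : ℕ, j < 2 * k + 2 → x (i + j) = (kinkWord k).getD j false) ↔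
      x i = true ∧ x (i + 2 * k + 1) = true ∧
        ∀ j : ℕ, 0 < j → j < 2 * k + 1 → x (i + j) = false := by
  simp only [kinkWord_getD]
  refine ⟨fun h => ⟨?_, ?_, fun j hj0 hj => ?_⟩, fun ⟨h0, h1, hz⟩ j hj => ?_⟩
  · simpa using h 0 (by omega)
  · simpa [add_assoc] using h (2 * k + 1) (by omega)
  · rw [h j (by omega)]
    simp only [Bool.or_eq_false_iff, beq_eq_false_iff_ne]
    omega
  · rcases Nat.lt_or_ge j 1 with hj0 | hj0
    · obtain rfl : j = 0 := by omega
      simpa using h0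
    · rcases Nat.lt_or_ge j (2 * k + 1) with hj1 | hj1
      · rw [hz j hj0 hj1, eq_comm]
        simp only [Bool.or_eq_false_iff, beq_eq_false_iff_ne]
        omega
      · obtain rfl : j = 2 * k + 1 := by omega
        simpa [add_assoc] using h1

lemma kinkAtC_iff {x : ℤ → Bool} {i : ℤ} :
    kinkAtC x i ↔ ∃ k : ℕ, x i = true ∧ x (i + 2 * k + 1) = true ∧
      ∀ j : ℕ, 0 < j → j < 2 * k + 1 → x (i + j) = false :=
  exists_congr fun _ => kinkWord_pattern_iff

lemma List.take_drop_eq_iff {α : Type*} {w v : List α} {d : α} (n : ℕ) (hv : v ≠ []) :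
    (w.drop n).take v.length = v ↔
      n + v.length ≤ w.length ∧ ∀ j < v.length, w.getD (n + j) d = v.getD j d := by
  constructor
  · intro h
    have hlen := congrArg List.length h
    simp only [List.length_take, List.length_drop] at hlen
    have := List.length_pos_iff.2 hv
    refine ⟨by omega, fun j hj => ?_⟩
    rw [← h]
    simp [List.getD_eq_getElem?_getD, hj]
  · rintro ⟨hlen, hget⟩
    refine List.ext_getElem (by simp; omega) fun j h₁ h₂ => ?_
    have := hget j h₂
    simp only [List.getD_eq_getElem?_getD, List.getElem?_eq_getElem (by omega : n + j < w.length),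
      List.getElem?_eq_getElem h₂, Option.getD_some] at this
    simpa using this

lemma kinkAtW_iff {w : List Bool} {n : ℕ} :
    kinkAtW w n ↔ ∃ k : ℕ, n + 2 * k + 2 ≤ w.length ∧
      ∀ j < 2 * k + 2, w.getD (n + j) false = (kinkWord k).getD j false := by
  have hlen (k : ℕ) : (kinkWord k).length = 2 * k + 2 := by simp [kinkWord]
  refine exists_congr fun k => ?_
  have := List.take_drop_eq_iff (w := w) (v := kinkWord k) (d := false) n (by simp [kinkWord])
  rw [hlen] at this
  simp only [this, add_assoc]

lemma kinkAtW.add_two_le {w : List Bool} {n : ℕ} (h : kinkAtW w n) : n + 2 ≤ w.length := by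
  obtain ⟨k, hk, -⟩ := kinkAtW_iff.1 h
  omega

lemma finite_kinkAtW (w : List Bool) : {n | kinkAtW w n}.Finite :=
  (Set.finite_Iio w.length).subset fun _ h => by
    have := kinkAtW.add_two_le h
    simp only [Set.mem_Iio]
    omega

section Cylinder

variable {w : List Bool} {a : ℤ} {x : ℤ → Bool}

lemma kinkAtC_of_kinkAtW (hx : x ∈ cyl w a) {n : ℕ} (h : kinkAtW w n) : kinkAtC x (a + n) := by
  obtain ⟨k, hn, hk⟩ := kinkAtW_iff.1 h
  refine ⟨k, fun j hj => ?_⟩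
  rw [← hk j hj, ← hx (n + j) (by omega)]
  push_cast
  ring_nf

lemma kinkAtW_of_kinkAtC {m : ℤ} {k : ℕ}
    (hx : x ∈ cyl w a) (hk : ∀ j : ℕ, j < 2 * k + 2 → x (m + j) = (kinkWord k).getD j false)
    (ha : a ≤ m) (hm : m + 2 * k + 2 ≤ a + w.length) : kinkAtW w (m - a).toNat := by
  refine kinkAtW_iff.2 ⟨k, by omega, fun j hj => ?_⟩
  rw [← hk j hj, ← hx _ (by omega)]
  congr 1
  omega

end Cylinder

lemma ncard_image_kinkAtW (w : List Bool) (a : ℤ) :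
    ((fun n : ℕ => a + n) '' {n | kinkAtW w n}).ncard = kinkCount w :=
  Set.ncard_image_of_injective _ fun _ _ h => by simpa using h

lemma exists_kinkAtW_of_mem_extC {w : List Bool} {a : ℤ} {x : ℤ → Bool} (hx : x ∈ extC w a)
    {m : ℤ} (hm : kinkAtC x m) : ∃ n, kinkAtW w n ∧ a + n = m := by
  obtain ⟨hcyl, hfin, hcard⟩ := hx
  have hsub : (fun n : ℕ => a + n) '' {n | kinkAtW w n} ⊆ {m | kinkAtC x m} := by
    rintro _ ⟨n, hn, rfl⟩
    exact kinkAtC_of_kinkAtW hcyl hn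
  have hm' : m ∈ {m | kinkAtC x m} := hm
  rw [← Set.eq_of_subset_of_ncard_le hsub (by rw [hcard, ncard_image_kinkAtW]) hfin] at hm'
  simpa using hm'

lemma exists_kinkAtC_between {x : ℤ → Bool} (k : ℕ) {i : ℤ} (hi : x i = true)
    (hj : x (i + 2 * k + 1) = true) : ∃ m, i ≤ m ∧ m ≤ i + 2 * k ∧ kinkAtC x m := by
  induction k using Nat.strong_induction_on generalizing i with
  | _ k ih =>
    have hex : ∃ n : ℕ, x (i + 1 + n) = true := ⟨2 * k, by push_cast; rwa [add_right_comm]⟩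
    obtain ⟨hn, hmin⟩ := Nat.find_spec hex, fun n => Nat.find_min hex (m := n)
    have hle : Nat.find hex ≤ 2 * k := Nat.find_min' hex (by push_cast; rwa [add_right_comm])
    -- The first `1` after `i` either closes a kink starting at `i`, or lies at odd distance
    -- from `i + 2 * k + 1`.
    obtain ⟨s, hs | hs⟩ := Nat.even_or_odd' (Nat.find hex)
    · refine ⟨i, le_rfl, by omega, kinkAtC_iff.2 ⟨s, hi, ?_, fun j hj0 hj => ?_⟩⟩
      · rw [hs] at hn; push_cast at hn; rwa [add_right_comm]
      · have := hmin (n := j - 1) (by omega)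
        simp only [Bool.not_eq_true] at this
        rwa [show i + 1 + ((j - 1 : ℕ) : ℤ) = i + j by omega] at this
    · obtain ⟨m, hm1, hm2, hm⟩ := ih (k - s - 1) (by omega) (i := i + 2 * s + 2)
        (by rw [hs] at hn; push_cast at hn; rwa [show i + 2 * s + 2 = i + 1 + (2 * s + 1) by ring])
        (by rwa [show i + 2 * s + 2 + 2 * ((k - s - 1 : ℕ) : ℤ) + 1 = i + 2 * k + 1 by omega])
      exact ⟨m, by omega, by omega, hm⟩

def OddPadded (w : List Bool) (a : ℤ) (x : ℤ → Bool) : Prop :=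
  x ∈ cyl w a ∧ ∀ t : ℕ, x (a - 1 - 2 * t) = false ∧ x (a + w.length + 2 * t) = false

lemma eq_true_at_ends_of_mem_cyl {w : List Bool} {a : ℤ} {x : ℤ → Bool} (hx : x ∈ cyl w a)
    (h0 : w.getD 0 false = true) (h1 : w.getD (w.length - 1) false = true) :
    0 < w.length ∧ x a = true ∧ x (a + w.length - 1) = true := by
  have hlen : 0 < w.length := by
    by_contra hw
    simp_all
  have hfirst := hx 0 hlen
  have hlast := hx (w.length - 1) (by omega)
  rw [h0, Nat.cast_zero, add_zero] at hfirst
  rw [h1, show a + ((w.length - 1 : ℕ) : ℤ) = a + w.length - 1 by omega] at hlast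
  exact ⟨hlen, hfirst, hlast⟩

namespace OddPadded

variable {w : List Bool} {a : ℤ} {x : ℤ → Bool}

lemma eq_false_of_lt (h : OddPadded w a x) {i : ℤ} (hi : i < a) (hodd : Odd (a - i)) :
    x i = false := by
  rw [Int.odd_iff] at hodd
  obtain ⟨t, rfl⟩ : ∃ t : ℕ, i = a - 1 - 2 * t := ⟨((a - 1 - i) / 2).toNat, by omega⟩
  exact (h.2 t).1

lemma eq_false_of_gt (h : OddPadded w a x) {i : ℤ} (hi : a + w.length - 1 < i)
    (hodd : Odd (i - (a + w.length - 1))) : x i = false := by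
  rw [Int.odd_iff] at hodd
  obtain ⟨t, rfl⟩ : ∃ t : ℕ, i = a + w.length + 2 * t := ⟨((i - a - w.length) / 2).toNat, by omega⟩
  exact (h.2 t).2

lemma exists_kinkAtW (h : OddPadded w a x) (h0 : w.getD 0 false = true)
    (h1 : w.getD (w.length - 1) false = true) {m : ℤ} (hm : kinkAtC x m) :
    ∃ n, kinkAtW w n ∧ a + n = m := by
  obtain ⟨k, hk⟩ := hm
  obtain ⟨hstart, hend, hzero⟩ := kinkWord_pattern_iff.1 hk
  obtain ⟨-, hxa, hxe⟩ := eq_true_at_ends_of_mem_cyl h.1 h0 h1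
  have ham : a ≤ m := by
    by_contra! hlt
    rcases Int.even_or_odd (a - m) with hev | hodd
    · rcases lt_or_ge (m + 2 * k + 1) a with hlt' | hge
      · refine absurd (h.eq_false_of_lt hlt' ?_) (by simp [hend])
        rw [Int.odd_iff]; rw [Int.even_iff] at hev; omega
      · have hne : a ≠ m + 2 * k + 1 := by rw [Int.even_iff] at hev; omega
        have := hzero (a - m).toNat (by omega) (by omega)
        rw [show m + ((a - m).toNat : ℤ) = a by omega, hxa] at this
        exact absurd this (by simp)
    · exact absurd (h.eq_false_of_lt hlt hodd) (by simp [hstart])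
  have hme : m + 2 * k + 2 ≤ a + w.length := by
    by_contra! hgt
    set e := a + (w.length : ℤ) - 1
    rcases Int.even_or_odd (m + 2 * k + 1 - e) with hev | hodd
    · rcases lt_or_ge e m with hlt' | hge
      · refine absurd (h.eq_false_of_gt hlt' ?_) (by simp [hstart])
        rw [Int.odd_iff]; rw [Int.even_iff] at hev; omega
      · have hne : e ≠ m := by rw [Int.even_iff] at hev; omega
        have := hzero (e - m).toNat (by omega) (by omega)
        rw [show m + ((e - m).toNat : ℤ) = e by omega, hxe] at this
        exact absurd this (by simp)
    · exact absurd (h.eq_false_of_gt (by omega) hodd) (by simp [hend])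
  exact ⟨_, kinkAtW_of_kinkAtC h.1 hk ham hme, by omega⟩

end OddPadded

section Characterization

variable {w : List Bool} {a : ℤ} {x : ℤ → Bool}

lemma OddPadded.mem_extC (h : OddPadded w a x) (h0 : w.getD 0 false = true)
    (h1 : w.getD (w.length - 1) false = true) : x ∈ extC w a := by
  have hset : {m | kinkAtC x m} = (fun n : ℕ => a + n) '' {n | kinkAtW w n} :=
    Set.Subset.antisymm (fun m hm => h.exists_kinkAtW h0 h1 hm)
      (by rintro _ ⟨n, hn, rfl⟩; exact kinkAtC_of_kinkAtW h.1 hn)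
  exact ⟨h.1, by rw [hset]; exact (finite_kinkAtW w).image _, by rw [hset, ncard_image_kinkAtW]⟩

lemma oddPadded_of_mem_extC (hx : x ∈ extC w a) (h0 : w.getD 0 false = true)
    (h1 : w.getD (w.length - 1) false = true) : OddPadded w a x := by
  obtain ⟨-, hxa, hxe⟩ := eq_true_at_ends_of_mem_cyl hx.1 h0 h1
  refine ⟨hx.1, fun t => ⟨?_, ?_⟩⟩
  · by_contra! hi
    obtain ⟨m, -, hm, hkink⟩ := exists_kinkAtC_between t (i := a - 1 - 2 * t) (by simpa using hi)
      (by rwa [show a - 1 - 2 * (t : ℤ) + 2 * t + 1 = a by ring])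
    obtain ⟨n, -, rfl⟩ := exists_kinkAtW_of_mem_extC hx hkink
    omega
  · by_contra! hi
    obtain ⟨m, hm, -, hkink⟩ := exists_kinkAtC_between t (i := a + w.length - 1) hxe
      (by rw [show a + w.length - 1 + 2 * (t : ℤ) + 1 = a + w.length + 2 * t by ring]
          simpa using hi)
    obtain ⟨n, hn, rfl⟩ := exists_kinkAtW_of_mem_extC hx hkink
    have := hn.add_two_le
    omega

lemma mem_extC_iff_oddPadded (h0 : w.getD 0 false = true)
    (h1 : w.getD (w.length - 1) false = true) : x ∈ extC w a ↔ OddPadded w a x :=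
  ⟨fun hx => oddPadded_of_mem_extC hx h0 h1, fun h => h.mem_extC h0 h1⟩

end Characterization

lemma rule18_false_mid (a c : Bool) : rule18 a false c = xor a c := by
  cases a <;> cases c <;> rfl

lemma rule18_false_false (b : Bool) : rule18 false b false = false := by
  cases b <;> rfl

lemma mapWord_getD (R : Bool → Bool → Bool → Bool) (v : List Bool) {j : ℕ}
    (hj : j + 2 < v.length) :
    (mapWord R v).getD j false =
      R (v.getD j false) (v.getD (j + 1) false) (v.getD (j + 2) false) := by
  rw [mapWord, List.getD_eq_getElem?_getD, List.getElem?_map, List.getElem?_range (by omega)]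
  rfl

def xorScan (u : ℕ → Bool) (b : Bool) : ℕ → Bool
  | 0 => b
  | t + 1 => xor (u t) (xorScan u b t)

/-- The preimage `y` of `x` that carries `v` on `[c, c + |v| - 1]` and vanishes at odd distance
from this window; at even distance it solves `y (m - 1) ^^ y (m + 1) = x m`, which is what `rule18`
computes around a `0`. -/
def oddPreimage (x : ℤ → Bool) (v : List Bool) (c : ℤ) (m : ℤ) : Bool :=
  if m < c then
    if Even (c - m) then xorScan (fun t => x (c - 1 - 2 * t)) (v.getD 0 false) ((c - m).toNat / 2)
    else false
  else if m < c + v.length then v.getD (m - c).toNat false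
  else if Even (m - (c + v.length - 1)) then
    xorScan (fun t => x (c + v.length + 2 * t)) (v.getD (v.length - 1) false)
      ((m - (c + v.length - 1)).toNat / 2)
  else false

section OddPreimage

variable (x : ℤ → Bool) (v : List Bool) (c : ℤ)

lemma oddPreimage_window {j : ℕ} (hj : j < v.length) :
    oddPreimage x v c (c + j) = v.getD j false := by
  simp [oddPreimage, hj]

lemma oddPreimage_left_odd (t : ℕ) : oddPreimage x v c (c - 1 - 2 * t) = false := by
  have : ¬ Even (c - (c - 1 - 2 * t)) := by rw [Int.not_even_iff_odd, Int.odd_iff]; omega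
  simp [oddPreimage, this, show c - 1 - 2 * (t : ℤ) < c by omega]

lemma oddPreimage_left_even (hv : 0 < v.length) (t : ℕ) :
    oddPreimage x v c (c - 2 * t) = xorScan (fun t => x (c - 1 - 2 * t)) (v.getD 0 false) t := by
  rcases t with _ | t
  · simpa [xorScan] using oddPreimage_window x v c hv
  · have : Even (c - (c - 2 * (t + 1 : ℕ))) := by rw [Int.even_iff]; omega
    simp only [oddPreimage, this, show c - 2 * ((t + 1 : ℕ) : ℤ) < c by omega, if_true]
    congr
    omega

lemma oddPreimage_right_odd (t : ℕ) : oddPreimage x v c (c + v.length + 2 * t) = false := by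
  have : ¬ Even (c + v.length + 2 * t - (c + v.length - 1)) := by
    rw [Int.not_even_iff_odd, Int.odd_iff]; omega
  simp only [oddPreimage]
  rw [if_neg (by omega), if_neg (by omega), if_neg this]

lemma oddPreimage_right_even (hv : 0 < v.length) (t : ℕ) :
    oddPreimage x v c (c + v.length - 1 + 2 * t) =
      xorScan (fun t => x (c + v.length + 2 * t)) (v.getD (v.length - 1) false) t := by
  rcases t with _ | t
  · simpa [xorScan, show c + ((v.length - 1 : ℕ) : ℤ) = c + v.length - 1 by omega] using
      oddPreimage_window x v c (j := v.length - 1) (by omega)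
  · have : Even (c + v.length - 1 + 2 * (t + 1 : ℕ) - (c + v.length - 1)) := by
      rw [Int.even_iff]; omega
    simp only [oddPreimage, this, if_true]
    rw [if_neg (by omega), if_neg (by push_cast; omega)]
    congr
    omega

lemma oddPadded_oddPreimage : OddPadded v c (oddPreimage x v c) :=
  ⟨fun _ hj => oddPreimage_window x v c hj,
    fun t => ⟨oddPreimage_left_odd x v c t, oddPreimage_right_odd x v c t⟩⟩

variable {x v c}

lemma f18C_oddPreimage_of_lt (hv : 0 < v.length) (hx : ∀ t : ℕ, x (c - 2 - 2 * t) = false)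
    {i : ℤ} (hi : i < c) : f18C (oddPreimage x v c) i = x i := by
  obtain ⟨t, rfl | rfl⟩ : ∃ t : ℕ, i = c - 1 - 2 * t ∨ i = c - 2 - 2 * t :=
    ⟨((c - 1 - i) / 2).toNat, by omega⟩
  · rw [f18C, show c - 1 - 2 * (t : ℤ) - 1 = c - 2 * (t + 1 : ℕ) by push_cast; ring,
      show c - 1 - 2 * (t : ℤ) + 1 = c - 2 * t by ring, oddPreimage_left_even x v c hv,
      oddPreimage_left_even x v c hv, oddPreimage_left_odd, rule18_false_mid, xorScan,
      Bool.xor_assoc, Bool.xor_self, Bool.xor_false]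
  · rw [f18C, show c - 2 - 2 * (t : ℤ) - 1 = c - 1 - 2 * (t + 1 : ℕ) by push_cast; ring,
      show c - 2 - 2 * (t : ℤ) + 1 = c - 1 - 2 * t by ring, oddPreimage_left_odd,
      oddPreimage_left_odd, rule18_false_false, hx]

lemma f18C_oddPreimage_of_gt (hv : 0 < v.length)
    (hx : ∀ t : ℕ, x (c + v.length + 1 + 2 * t) = false) {i : ℤ} (hi : c + v.length - 1 < i) :
    f18C (oddPreimage x v c) i = x i := by
  obtain ⟨t, rfl | rfl⟩ : ∃ t : ℕ, i = c + v.length + 2 * t ∨ i = c + v.length + 1 + 2 * t :=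
    ⟨((i - c - v.length) / 2).toNat, by omega⟩
  · rw [f18C, show c + v.length + 2 * (t : ℤ) - 1 = c + v.length - 1 + 2 * t by ring,
      show c + v.length + 2 * (t : ℤ) + 1 = c + v.length - 1 + 2 * (t + 1 : ℕ) by push_cast; ring,
      oddPreimage_right_even x v c hv, oddPreimage_right_even x v c hv, oddPreimage_right_odd,
      rule18_false_mid, xorScan, Bool.xor_left_comm, Bool.xor_self, Bool.xor_false]
  · rw [f18C, show c + v.length + 1 + 2 * (t : ℤ) - 1 = c + v.length + 2 * t by ring,
      show c + v.length + 1 + 2 * (t : ℤ) + 1 = c + v.length + 2 * (t + 1 : ℕ) by push_cast; ring,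
      oddPreimage_right_odd, oddPreimage_right_odd, rule18_false_false, hx]

lemma f18C_oddPreimage_self (hv : 2 ≤ v.length) :
    f18C (oddPreimage x v c) c = rule18 false (v.getD 0 false) (v.getD 1 false) := by
  have hleft : oddPreimage x v c (c - 1) = false := by
    simpa using oddPreimage_left_odd x v c 0
  have hfirst : oddPreimage x v c c = v.getD 0 false := by
    simpa using oddPreimage_window x v c (j := 0) (by omega)
  have hsecond : oddPreimage x v c (c + 1) = v.getD 1 false := by
    simpa using oddPreimage_window x v c (j := 1) (by omega)
  rw [f18C, hleft, hfirst, hsecond]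

lemma f18C_oddPreimage_last (hv : 2 ≤ v.length) :
    f18C (oddPreimage x v c) (c + v.length - 1) =
      rule18 (v.getD (v.length - 2) false) (v.getD (v.length - 1) false) false := by
  have hright : oddPreimage x v c (c + v.length - 1 + 1) = false := by
    simpa using oddPreimage_right_odd x v c 0
  have hlast : oddPreimage x v c (c + v.length - 1) = v.getD (v.length - 1) false := by
    rw [← oddPreimage_window x v c (j := v.length - 1) (by omega)]
    congr 1
    omega
  have hpenult : oddPreimage x v c (c + v.length - 1 - 1) = v.getD (v.length - 2) false := by
    rw [← oddPreimage_window x v c (j := v.length - 2) (by omega)]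
    congr 1
    omega
  rw [f18C, hright, hlast, hpenult]

lemma f18C_oddPreimage_of_mem_window {i : ℤ} (hci : c < i) (hi : i < c + v.length - 1) :
    f18C (oddPreimage x v c) i = (f18W v).getD (i - c - 1).toNat false := by
  rw [f18W, mapWord_getD _ _ (by omega), f18C]
  congr 1 <;> rw [← oddPreimage_window x v c (by omega)] <;> congr 1 <;> omega

end OddPreimage

/-- The border conditions make the image vanish next to the window of `w`, as `OddPadded`
requires. -/
abbrev IsPaddedPreimage (v w : List Bool) : Prop :=
  v.length = w.length + 2 ∧ f18W v = w ∧
    rule18 false (v.getD 0 false) (v.getD 1 false) = false ∧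
    rule18 (v.getD (v.length - 2) false) (v.getD (v.length - 1) false) false = false

lemma OddPadded.exists_preimage {w v : List Bool} {a : ℤ} {x : ℤ → Bool} (h : OddPadded w a x)
    (hv : IsPaddedPreimage v w) : ∃ y, f18C y = x ∧ OddPadded v (a - 1) y := by
  obtain ⟨hlen, hmap, hL, hR⟩ := hv
  set c := a - 1
  refine ⟨oddPreimage x v c, funext fun i => ?_, oddPadded_oddPreimage x v c⟩
  rcases lt_trichotomy i c with hi | rfl | hi
  · refine f18C_oddPreimage_of_lt (by omega) (fun t => ?_) hi
    rw [show c - 2 - 2 * (t : ℤ) = a - 1 - 2 * (t + 1 : ℕ) by push_cast; ring]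
    exact (h.2 (t + 1)).1
  · rw [f18C_oddPreimage_self (by omega), hL]
    simpa using (h.2 0).1.symm
  rcases lt_trichotomy i (c + v.length - 1) with hi' | rfl | hi'
  · rw [f18C_oddPreimage_of_mem_window hi hi', hmap, ← h.1 _ (by omega)]
    congr 1
    omega
  · rw [f18C_oddPreimage_last (by omega), hR]
    simpa [show a + w.length = c + v.length - 1 by omega] using (h.2 0).2.symm
  · refine f18C_oddPreimage_of_gt (by omega) (fun t => ?_) hi'
    rw [show c + v.length + 1 + 2 * (t : ℤ) = a + w.length + 2 * (t + 1 : ℕ) by push_cast; omega]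
    exact (h.2 (t + 1)).2

lemma OddPadded.of_append {u v r : List Bool} {a : ℤ} {x : ℤ → Bool}
    (h : OddPadded (u ++ v ++ r) a x) (hu : Even u.length) (hr : Even r.length)
    (hu0 : ∀ j < u.length, Odd j → u.getD j false = false)
    (hr0 : ∀ j < r.length, Even j → r.getD j false = false) : OddPadded v (a + u.length) x := by
  obtain ⟨hcyl, hpad⟩ := h
  have hlen : (u ++ v ++ r).length = u.length + v.length + r.length := by simp [add_assoc]
  obtain ⟨p, hp⟩ := hu
  obtain ⟨q, hq⟩ := hr
  refine ⟨fun j hj => ?_, fun t => ⟨?_, ?_⟩⟩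
  · have := hcyl (u.length + j) (by omega)
    rwa [List.append_assoc, List.getD_append_right _ _ _ _ (by omega), Nat.add_sub_cancel_left,
      List.getD_append _ _ _ _ hj, Nat.cast_add, ← add_assoc] at this
  · rcases lt_or_ge t p with htp | htp
    · have := hcyl (u.length - 1 - 2 * t) (by omega)
      rw [List.append_assoc, List.getD_append _ _ _ _ (by omega),
        hu0 _ (by omega) (by rw [Nat.odd_iff]; omega)] at this
      rwa [show a + ((u.length - 1 - 2 * t : ℕ) : ℤ) = a + u.length - 1 - 2 * t by omega] at this
    · have := (hpad (t - p)).1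
      rwa [show a - 1 - 2 * ((t - p : ℕ) : ℤ) = a + u.length - 1 - 2 * t by omega] at this
  · rcases lt_or_ge t q with htq | htq
    · have := hcyl (u.length + v.length + 2 * t) (by omega)
      rw [List.getD_append_right _ _ _ _ (by simp), List.length_append,
        hr0 _ (by omega) (by rw [Nat.even_iff]; omega)] at this
      rwa [Nat.cast_add, Nat.cast_add, ← add_assoc, ← add_assoc] at this
    · have := (hpad (t - q)).2
      rwa [hlen, show a + ((u.length + v.length + r.length : ℕ) : ℤ) + 2 * ((t - q : ℕ) : ℤ) =
        a + u.length + v.length + 2 * t by omega] at this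

section IterateImage

variable {α : Type*} {f : α → α}

lemma subset_iterate_image_trans {s t u : Set α} {a b : ℕ} (hst : s ⊆ f^[a] '' t)
    (htu : t ⊆ f^[b] '' u) : s ⊆ f^[a + b] '' u := by
  rw [Function.iterate_add, Set.image_comp]
  exact hst.trans (Set.image_mono htu)

variable {S : ℤ → Set α} {m : ℕ}

lemma subset_iterate_image_sub (h : ∀ p, S p ⊆ f^[m] '' S (p - 1)) (i : ℤ) (d : ℕ) :
    S i ⊆ f^[m * d] '' S (i - d) := by
  induction d with
  | zero => simp
  | succ d ih =>
    rw [Nat.cast_succ, ← sub_sub, mul_add_one]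
    exact subset_iterate_image_trans ih (h _)

lemma subset_iterate_image_add (h : ∀ p, S p ⊆ f^[m] '' S (p + 1)) (i : ℤ) (d : ℕ) :
    S i ⊆ f^[m * d] '' S (i + d) := by
  induction d with
  | zero => simp
  | succ d ih =>
    rw [Nat.cast_succ, ← add_assoc, mul_add_one]
    exact subset_iterate_image_trans ih (h _)

lemma exists_subset_iterate_image {n : ℕ} (hl : ∀ p, S p ⊆ f^[m] '' S (p - 1))
    (hr : ∀ p, S p ⊆ f^[n] '' S (p + 1)) (i j : ℤ) : ∃ k, S i ⊆ f^[k] '' S j := by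
  obtain ⟨d, rfl | rfl⟩ : ∃ d : ℕ, j = i + d ∨ j = i - d := ⟨(j - i).natAbs, by omega⟩
  · exact ⟨_, subset_iterate_image_add hr i d⟩
  · exact ⟨_, subset_iterate_image_sub hl i d⟩

end IterateImage

def ofBits (l : List ℕ) : List Bool := l.map (· = 1)

abbrev word1101001 : List Bool := ofBits [1, 1, 0, 1, 0, 0, 1]

lemma mem_extC_word1101001_iff {a : ℤ} {x : ℤ → Bool} :
    x ∈ extC word1101001 a ↔ OddPadded word1101001 a x :=
  mem_extC_iff_oddPadded (by decide) (by decide)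

lemma extC_word1101001_subset_left (p : ℤ) :
    extC word1101001 p ⊆ f18C^[3] '' extC word1101001 (p - 1) := by
  intro x hx
  obtain ⟨y₁, rfl, h₁⟩ := (mem_extC_word1101001_iff.1 hx).exists_preimage
    (v := ofBits [1, 0, 0, 1, 0, 0, 0, 0, 1]) (by decide)
  obtain ⟨y₂, rfl, h₂⟩ := h₁.exists_preimage (v := ofBits [1, 0, 0, 0, 0, 1, 1, 0, 1, 0, 0])
    (by decide)
  obtain ⟨y₃, rfl, h₃⟩ := h₂.exists_preimage
    (v := ofBits [0, 0] ++ word1101001 ++ ofBits [0, 0, 0, 0]) (by decide)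
  refine ⟨y₃, mem_extC_word1101001_iff.2 ?_, rfl⟩
  have := h₃.of_append (by decide) (by decide) (by decide) (by decide)
  rwa [show p - 1 - 1 - 1 + ((ofBits [0, 0]).length : ℤ) = p - 1 by simp [ofBits]; ring] at this

lemma extC_word1101001_subset_right (p : ℤ) :
    extC word1101001 p ⊆ f18C^[5] '' extC word1101001 (p + 1) := by
  intro x hx
  obtain ⟨y₁, rfl, h₁⟩ := (mem_extC_word1101001_iff.1 hx).exists_preimage
    (v := ofBits [1, 0, 0, 1, 0, 0, 0, 0, 1]) (by decide)
  obtain ⟨y₂, rfl, h₂⟩ := h₁.exists_preimage (v := ofBits [1, 0, 0, 0, 0, 1, 0, 1, 1, 0, 0])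
    (by decide)
  obtain ⟨y₃, rfl, h₃⟩ := h₂.exists_preimage
    (v := ofBits [1, 0, 0, 0, 0, 0, 0, 1, 0, 0, 1, 0, 1]) (by decide)
  obtain ⟨y₄, rfl, h₄⟩ := h₃.exists_preimage
    (v := ofBits [1, 0, 0, 0, 0, 0, 0, 0, 0, 1, 1, 0, 0, 0, 1]) (by decide)
  obtain ⟨y₅, rfl, h₅⟩ := h₄.exists_preimage
    (v := ofBits [0, 0, 1, 0, 1, 0] ++ word1101001 ++ ofBits [0, 1, 0, 0]) (by decide)
  refine ⟨y₅, mem_extC_word1101001_iff.2 ?_, rfl⟩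
  have := h₅.of_append (by decide) (by decide) (by decide) (by decide)
  rwa [show p - 1 - 1 - 1 - 1 - 1 + ((ofBits [0, 0, 1, 0, 1, 0]).length : ℤ) = p + 1 by
    simp [ofBits]; ring] at this

/-- The word `1101001` can be moved from any position to any other position. -/
theorem move_1101001 (i j : ℤ) :
    ∃ n : ℕ, extC [true, true, false, true, false, false, true] i ⊆
      f18C^[n] '' extC [true, true, false, true, false, false, true] j :=
  exists_subset_iterate_image extC_word1101001_subset_left extC_word1101001_subset_right i j
end
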